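/- arXiv:1607.04528 — 4 statements merged into one kernel-verified Lean document; each statement's English description precedes it below -/
import Mathlib

section
/- Let U be an N×N unitary Hermitian matrix with constant diagonal U_ii = cos θ where d = N·sin²(θ/2) for θ ∈ [0, π/2]. Then G = (N/(2d))·(I − U) satisfies: G_ii = 1 for all i, |G_ij|² = (N−d)/(d(N−1)) for all i ≠ j, and the eigenvalues of G lie in {0, N/d}. -/
/-! Being Hermitian and unitary, `U` squares to `1`, so `P = (1 - U) / 2` is idempotent and
`G = (N / d) • P` satisfies `G * G = (N / d) • G`: the polynomial `X (X - N / d)` annihilates `G`,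
hence vanishes on its spectrum. The entries of `G` follow from
`N (1 - cos θ) = 2 N sin² (θ / 2) = 2 d` and `sin² θ = (1 - cos θ)(1 + cos θ)`. -/

open Real

open Polynomial in
theorem spectrum_subset_of_mul_self_eq_smul {𝕜 A : Type*} [Field 𝕜] [Ring A] [Algebra 𝕜 A]
    {a : A} {t : 𝕜} (h : a * a = t • a) : spectrum 𝕜 a ⊆ {0, t} := by
  intro μ hμ
  rcases subsingleton_or_nontrivial A with _ | _
  · simp [spectrum.of_subsingleton] at hμ
  have hp : aeval a (X * (X - C t)) = 0 := by
    simp [mul_sub, h, Algebra.algebraMap_eq_smul_one]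
  have hroot := spectrum.subset_polynomial_aeval a (X * (X - C t)) ⟨μ, hμ, rfl⟩
  rw [hp, spectrum.zero_eq, Set.mem_singleton_iff] at hroot
  simpa [sub_eq_zero] using hroot

theorem smul_one_sub_mul_self_of_mul_self_eq_one {𝕜 A : Type*} [CommSemiring 𝕜] [Ring A] [Algebra 𝕜 A]
    {u : A} (hu : u * u = 1) (c : 𝕜) :
    (c • (1 - u)) * (c • (1 - u)) = (2 * c) • (c • (1 - u)) := by
  have hsq : (1 - u) * (1 - u) = (1 - u) + (1 - u) :=
    calc (1 - u) * (1 - u) = 1 - u - u + u * u := by noncomm_ring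
      _ = (1 - u) + (1 - u) := by rw [hu]; abel
  rw [smul_mul_smul_comm, hsq, ← two_smul 𝕜, smul_smul, smul_smul]
  ring_nf

theorem stmt_2_general {N d : ℕ} (θ : ℝ)
    (hdθ : (d : ℝ) = N * Real.sin (θ / 2) ^ 2) (hd0 : 0 < d)
    (U : Matrix (Fin N) (Fin N) ℂ) (hU : U ∈ Matrix.unitaryGroup (Fin N) ℂ)
    (hherm : U.IsHermitian)
    (hdiag : ∀ i, U i i = (Real.cos θ : ℂ))
    (hoff : ∀ i j, i ≠ j → ‖U i j‖ ^ 2 = Real.sin θ ^ 2 / (N - 1)) :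
    (∀ i, (((N : ℂ) / (2 * d)) • ((1 : Matrix (Fin N) (Fin N) ℂ) - U)) i i = 1) ∧
    (∀ i j, i ≠ j →
      ‖(((N : ℂ) / (2 * d)) • ((1 : Matrix (Fin N) (Fin N) ℂ) - U)) i j‖ ^ 2
        = ((N : ℝ) - d) / (d * (N - 1))) ∧
    (∀ μ ∈ spectrum ℂ (((N : ℂ) / (2 * d)) • ((1 : Matrix (Fin N) (Fin N) ℂ) - U)),
      μ = 0 ∨ μ = (N : ℂ) / d) := by
  have hd : (d : ℝ) ≠ 0 := by positivity
  have hdC : (d : ℂ) ≠ 0 := by exact_mod_cast hd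
  have hcos : N * (1 - cos θ) = 2 * d := by
    have h := cos_two_mul_eq_one_sub (θ / 2)
    rw [mul_div_cancel₀ θ two_ne_zero] at h
    rw [h, hdθ]
    ring
  have hsin : N ^ 2 * sin θ ^ 2 = 4 * d * (N - d) :=
    calc (N : ℝ) ^ 2 * sin θ ^ 2 = (N * (1 - cos θ)) * (2 * N - N * (1 - cos θ)) := by
          rw [sin_sq]; ring
      _ = 4 * d * (N - d) := by rw [hcos]; ring
  refine ⟨fun i => ?_, fun i j hij => ?_, fun μ hμ => ?_⟩
  · have hcosC : (N : ℂ) * (1 - cos θ) = 2 * d := by exact_mod_cast hcos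
    simp only [Matrix.smul_apply, Matrix.sub_apply, Matrix.one_apply_eq, hdiag, smul_eq_mul]
    rw [div_mul_eq_mul_div, hcosC, div_self (mul_ne_zero two_ne_zero hdC)]
  · simp only [Matrix.smul_apply, Matrix.sub_apply, Matrix.one_apply_ne hij, smul_eq_mul,
      zero_sub, norm_mul, norm_neg, mul_pow, hoff i j hij]
    have hnorm : ‖(N : ℂ) / (2 * d)‖ = N / (2 * d) := by simp
    rw [hnorm, div_pow, div_mul_div_comm, hsin]
    field_simp
    ring
  · have hUU : U * U = 1 := by
      simpa [Matrix.star_eq_conjTranspose, hherm.eq] using hU.1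
    have hμ' := spectrum_subset_of_mul_self_eq_smul (smul_one_sub_mul_self_of_mul_self_eq_one hUU _) hμ
    have h2 : 2 * ((N : ℂ) / (2 * d)) = N / d := by field_simp
    rwa [h2] at hμ'

theorem stmt_2 {N d : ℕ} (θ : ℝ) (hθ : θ ∈ Set.Ioo 0 (Real.pi / 2))
    (hdθ : (d : ℝ) = N * Real.sin (θ / 2) ^ 2) (hd0 : 0 < d) (hdN : d < N)
    (U : Matrix (Fin N) (Fin N) ℂ) (hU : U ∈ Matrix.unitaryGroup (Fin N) ℂ)
    (hherm : U.IsHermitian)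
    (hdiag : ∀ i, U i i = (Real.cos θ : ℂ))
    (hoff : ∀ i j, i ≠ j → ‖U i j‖ ^ 2 = Real.sin θ ^ 2 / (N - 1)) :
    (∀ i, (((N : ℂ) / (2 * d)) • ((1 : Matrix (Fin N) (Fin N) ℂ) - U)) i i = 1) ∧
    (∀ i j, i ≠ j →
      ‖(((N : ℂ) / (2 * d)) • ((1 : Matrix (Fin N) (Fin N) ℂ) - U)) i j‖ ^ 2
        = ((N : ℝ) - d) / (d * (N - 1))) ∧
    (∀ μ ∈ spectrum ℂ (((N : ℂ) / (2 * d)) • ((1 : Matrix (Fin N) (Fin N) ℂ) - U)),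
      μ = 0 ∨ μ = (N : ℂ) / d) :=
  stmt_2_general θ hdθ hd0 U hU hherm hdiag hoff
end

section
/- If G is the Gram matrix of an ETF(d,N) (G Hermitian, G_jj = 1, eigenvalues in {0, N/d}, |G_jl| = √((N−d)/(d(N−1))) for j ≠ l), then U = I − (2d/N)·G is unitary, Hermitian, with constant diagonal U_ii = 1 − 2d/N, and |U_ij|² = sin²(θ)/(N−1) for i ≠ j where cos θ = 1 − 2d/N. -/
/-!
Since `G` is Hermitian with spectrum in `{0, N/d}`, the spectral theorem gives `G² = (N/d) G`, so
`P = (d/N) G` is an orthogonal projection and `U = 1 - 2P = 2(1 - P) - 1` is a Hermitian reflection,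
hence unitary. The entries of `U` are read off from those of `G`, with `sin² θ = 1 - cos² θ`.
-/

open Matrix

theorem Matrix.IsHermitian.mul_self_eq_smul_of_spectrum_subset {𝕜 n : Type*} [RCLike 𝕜]
    [Fintype n] [DecidableEq n] {A : Matrix n n 𝕜} (hA : A.IsHermitian) {r : 𝕜}
    (h : ∀ μ ∈ spectrum 𝕜 A, μ = 0 ∨ μ = r) : A * A = r • A := by
  set φ := Unitary.conjStarAlgAut 𝕜 _ hA.eigenvectorUnitary
  set D : Matrix n n 𝕜 := diagonal (RCLike.ofReal ∘ hA.eigenvalues)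
  have hD : D * D = r • D := by
    rw [diagonal_mul_diagonal, ← diagonal_smul]
    congr 1
    funext i
    rcases h _ (spectrum.algebraMap_mem 𝕜 (hA.eigenvalues_mem_spectrum_real i)) with h0 | hr <;>
      simp_all
  calc A * A = φ (D * D) := by rw [map_mul, ← hA.spectral_theorem]
    _ = r • A := by rw [hD, map_smul, ← hA.spectral_theorem]

theorem IsStarProjection.inv_smul_of_mul_self_eq_smul {K A : Type*} [Field K] [StarRing K]
    [Ring A] [StarRing A] [Algebra K A] [StarModule K A] {r : K} {P : A}
    (hr : IsSelfAdjoint r) (hP : IsSelfAdjoint P) (h : P * P = r • P) :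
    IsStarProjection (r⁻¹ • P) where
  isIdempotentElem := by
    rw [IsIdempotentElem, smul_mul_smul_comm, h, smul_smul]
    rcases eq_or_ne r 0 with rfl | hr0
    · simp
    · rw [inv_mul_cancel_right₀ hr0]
  isSelfAdjoint := hr.inv₀.smul hP

theorem two_mul_div_sq_mul_div_eq_one_sub_sq_div (d N : ℝ) :
    (2 * d / N) ^ 2 * ((N - d) / (d * (N - 1))) = (1 - (1 - 2 * d / N) ^ 2) / (N - 1) := by
  rcases eq_or_ne d 0 with rfl | hd
  · simp
  rcases eq_or_ne N 0 with rfl | hN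
  · simp
  rcases eq_or_ne (N - 1) 0 with hN1 | hN1
  · simp [hN1]
  field_simp
  ring

theorem stmt_3_general {N d : ℕ} (hdN : d < N)
    (G : Matrix (Fin N) (Fin N) ℂ) (hG : G.IsHermitian)
    (hdiag : ∀ j, G j j = 1)
    (hoff : ∀ j l, j ≠ l →
      ‖G j l‖ = Real.sqrt (((N : ℝ) - d) / (d * (N - 1))))
    (hspec : ∀ μ ∈ spectrum ℂ G, μ = 0 ∨ μ = (N : ℂ) / d) :
    ((1 : Matrix (Fin N) (Fin N) ℂ) - ((2 * d : ℂ) / N) • G) ∈ Matrix.unitaryGroup (Fin N) ℂ ∧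
    ((1 : Matrix (Fin N) (Fin N) ℂ) - ((2 * d : ℂ) / N) • G).IsHermitian ∧
    (∀ i, ((1 : Matrix (Fin N) (Fin N) ℂ) - ((2 * d : ℂ) / N) • G) i i
      = ((1 - 2 * (d : ℝ) / N : ℝ) : ℂ)) ∧
    (∀ θ : ℝ, Real.cos θ = 1 - 2 * (d : ℝ) / N →
      ∀ i j, i ≠ j →
        ‖((1 : Matrix (Fin N) (Fin N) ℂ) - ((2 * d : ℂ) / N) • G) i j‖ ^ 2
          = Real.sin θ ^ 2 / (N - 1)) := by
  have hP : IsStarProjection (((N : ℂ) / d)⁻¹ • G) :=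
    .inv_smul_of_mul_self_eq_smul ((IsSelfAdjoint.natCast N).div (.natCast d)) hG
      (hG.mul_self_eq_smul_of_spectrum_subset hspec)
  have hU : 1 - ((2 * d : ℂ) / N) • G = 2 * (1 - ((N : ℂ) / d)⁻¹ • G) - 1 := by
    rw [inv_div, mul_div_assoc, mul_smul, two_mul, two_smul]
    abel
  refine ⟨hU ▸ hP.one_sub.two_mul_sub_one_mem_unitary, ?_, fun i ↦ ?_, fun θ hθ i j hij ↦ ?_⟩
  · rw [hU, two_mul]
    exact (hP.one_sub.isSelfAdjoint.add hP.one_sub.isSelfAdjoint).sub (.one _)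
  · simp [hdiag]
  · have hN1 : (1 : ℝ) ≤ N := by exact_mod_cast (Fin.pos i)
    have hdN' : (d : ℝ) ≤ N := by exact_mod_cast hdN.le
    rw [Matrix.sub_apply, one_apply_ne hij, zero_sub, norm_neg, Matrix.smul_apply, smul_eq_mul,
      norm_mul, mul_pow, hoff i j hij, Real.sq_sqrt (by positivity), Real.sin_sq, hθ]
    simpa using two_mul_div_sq_mul_div_eq_one_sub_sq_div d N

theorem stmt_3 {N d : ℕ} (hd0 : 0 < d) (hdN : d < N)
    (G : Matrix (Fin N) (Fin N) ℂ) (hG : G.IsHermitian)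
    (hdiag : ∀ j, G j j = 1)
    (hoff : ∀ j l, j ≠ l →
      ‖G j l‖ = Real.sqrt (((N : ℝ) - d) / (d * (N - 1))))
    (hspec : ∀ μ ∈ spectrum ℂ G, μ = 0 ∨ μ = (N : ℂ) / d) :
    ((1 : Matrix (Fin N) (Fin N) ℂ) - ((2 * d : ℂ) / N) • G) ∈ Matrix.unitaryGroup (Fin N) ℂ ∧
    ((1 : Matrix (Fin N) (Fin N) ℂ) - ((2 * d : ℂ) / N) • G).IsHermitian ∧
    (∀ i, ((1 : Matrix (Fin N) (Fin N) ℂ) - ((2 * d : ℂ) / N) • G) i i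
      = ((1 - 2 * (d : ℝ) / N : ℝ) : ℂ)) ∧
    (∀ θ : ℝ, Real.cos θ = 1 - 2 * (d : ℝ) / N →
      ∀ i j, i ≠ j →
        ‖((1 : Matrix (Fin N) (Fin N) ℂ) - ((2 * d : ℂ) / N) • G) i j‖ ^ 2
          = Real.sin θ ^ 2 / (N - 1)) :=
  stmt_3_general hdN G hG hdiag hoff hspec
end

section
/- If a unistochastic matrix B_N(θ) of the special form (diagonal entries cos²θ, off-diagonal entries sin²(θ)/(N−1), underlying unitary Hermitian with constant nonnegative diagonal cos θ) exists, then N·sin²(θ/2) is related to the rank d of the associated Gram matrix by d = N·sin²(θ/2); in particular N cos θ = N − 2d. -/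
/-! A Hermitian unitary `U` is an involution, so `(1 - U) / 2` is idempotent and its trace equals
its rank. Hence `2 d = tr (1 - U) = N (1 - cos θ) = 2 N sin² (θ / 2)`. -/

open Matrix

section

variable {n K : Type*} [Fintype n] [DecidableEq n] [Field K]

theorem Matrix.trace_eq_rank_of_isIdempotentElem {P : Matrix n n K} (hP : IsIdempotentElem P) :
    P.trace = P.rank := by
  have hlin : IsIdempotentElem (toLin' P) := hP.map toLinAlgEquiv'
  rw [rank, ← toLin'_apply', ← trace_toLin'_eq]
  exact (LinearMap.IsIdempotentElem.isProj_range _ hlin).trace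

theorem Matrix.trace_one_sub_eq_two_mul_rank [NeZero (2 : K)] {U : Matrix n n K}
    (hU : U * U = 1) : (1 - U).trace = 2 * (1 - U).rank := by
  have h2 : (2 : K) ≠ 0 := two_ne_zero
  have hsq : (1 - U) * (1 - U) = (2 : K) • (1 - U) := by
    simp only [sub_mul, mul_sub, one_mul, mul_one, hU, two_smul]
    abel
  have hidem : IsIdempotentElem ((2 : K)⁻¹ • (1 - U)) := by
    rw [IsIdempotentElem, smul_mul_smul_comm, hsq, smul_smul, mul_assoc, inv_mul_cancel₀ h2,
      mul_one]
  have h := trace_eq_rank_of_isIdempotentElem hidem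
  rw [trace_smul, smul_eq_mul,
    rank_smul_of_mem_nonZeroDivisors _ (mem_nonZeroDivisors_of_ne_zero (inv_ne_zero h2))] at h
  rw [← h, mul_inv_cancel_left₀ h2]

end

theorem Matrix.mul_self_eq_one_of_mem_unitaryGroup_of_isHermitian {n α : Type*} [Fintype n]
    [DecidableEq n] [CommRing α] [StarRing α] {U : Matrix n n α} (hU : U ∈ unitaryGroup n α)
    (hherm : U.IsHermitian) : U * U = 1 := by
  simpa [star_eq_conjTranspose, hherm.eq] using mem_unitaryGroup_iff'.mp hU

theorem Real.cos_eq_one_sub_two_mul_sin_half_sq (x : ℝ) :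
    Real.cos x = 1 - 2 * Real.sin (x / 2) ^ 2 := by
  calc Real.cos x = Real.cos (2 * (x / 2)) := by rw [mul_div_cancel₀ x two_ne_zero]
    _ = 1 - 2 * Real.sin (x / 2) ^ 2 := by rw [Real.cos_two_mul, Real.cos_sq']; ring

theorem stmt_7_general {N : ℕ} (θ : ℝ)
    (U : Matrix (Fin N) (Fin N) ℂ) (hU : U ∈ Matrix.unitaryGroup (Fin N) ℂ)
    (hherm : U.IsHermitian)
    (hdiag : ∀ i, U i i = (Real.cos θ : ℂ))
    (d : ℕ) (hd : d = ((1 : Matrix (Fin N) (Fin N) ℂ) - U).rank) :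
    (d : ℝ) = N * Real.sin (θ / 2) ^ 2 ∧ (N : ℝ) * Real.cos θ = N - 2 * d := by
  have htrace : (1 - U).trace = N * (1 - Real.cos θ) := by
    simp [Matrix.trace, hdiag, mul_sub]
  have hkey : (N : ℝ) * (1 - Real.cos θ) = 2 * d := by
    have h := trace_one_sub_eq_two_mul_rank
      (mul_self_eq_one_of_mem_unitaryGroup_of_isHermitian hU hherm)
    rw [htrace, ← hd] at h
    exact_mod_cast h
  rw [Real.cos_eq_one_sub_two_mul_sin_half_sq] at hkey ⊢
  constructor <;> linarith

theorem stmt_7 {N : ℕ} (θ : ℝ) (hcos : 0 ≤ Real.cos θ) (hθ : θ ∈ Set.Icc 0 (Real.pi / 2))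
    (B : Matrix (Fin N) (Fin N) ℝ)
    (hBdiag : ∀ i, B i i = Real.cos θ ^ 2)
    (hBoff : ∀ i j, i ≠ j → B i j = Real.sin θ ^ 2 / (N - 1))
    (U : Matrix (Fin N) (Fin N) ℂ) (hU : U ∈ Matrix.unitaryGroup (Fin N) ℂ)
    (hherm : U.IsHermitian)
    (hdiag : ∀ i, U i i = (Real.cos θ : ℂ))
    (hUB : ∀ i j, ‖U i j‖ ^ 2 = B i j)
    (d : ℕ) (hd : d = ((1 : Matrix (Fin N) (Fin N) ℂ) - U).rank) :
    (d : ℝ) = N * Real.sin (θ / 2) ^ 2 ∧ (N : ℝ) * Real.cos θ = N - 2 * d :=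
  stmt_7_general θ U hU hherm hdiag d hd
end

section
/- If H is an N×N complex Hadamard matrix (all entries of modulus 1, rows pairwise orthogonal) and columns C_A, C_B form an ER pair, then the matrix H(α) obtained by replacing columns C_A, C_B with C_A(α), C_B(α) (ER-pair phase construction) is a complex Hadamard matrix for every α ∈ ℝ. -/
open Complex ComplexConjugate

/-!
In a row where `H i A * conj (H i B) = 1` the entries in columns `A` and `B` agree, and where it
is `-1` they are opposite; so in every row the new columns are
`(1 + e)/2 • C_A + (1 - e)/2 • C_B` and `(1 - e)/2 • C_A + (1 + e)/2 • C_B`, with `e = exp (α I)`.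
Any other column is orthogonal to both `C_A` and `C_B`, hence to these combinations. The two new
columns are orthogonal to each other because, row by row, either both or neither of their entries
is multiplied by `e`, and `conj e * e = 1`.
-/

theorem Complex.conj_mul_self_of_norm_eq_one {z : ℂ} (hz : ‖z‖ = 1) : conj z * z = 1 := by
  rw [conj_mul', hz]; norm_num

theorem Complex.eq_mul_of_mul_conj_eq {x y c : ℂ} (hy : ‖y‖ = 1) (h : x * conj y = c) :
    x = c * y := by
  rw [← h, mul_assoc, conj_mul_self_of_norm_eq_one hy, mul_one]

theorem Complex.eq_or_eq_neg_of_mul_conj_eq_one_or_neg_one {x y : ℂ} (hy : ‖y‖ = 1)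
    (h : x * conj y = 1 ∨ x * conj y = -1) :
    (x = y ∧ x * conj y ≠ -1) ∨ (x = -y ∧ x * conj y = -1) := by
  rcases h with h | h
  · refine .inl ⟨by simpa using eq_mul_of_mul_conj_eq hy h, by rw [h]; norm_num⟩
  · exact .inr ⟨by simpa using eq_mul_of_mul_conj_eq hy h, h⟩

section Orthogonality

variable {m : Type*} [Fintype m] {x y u v : m → ℂ}

theorem Finset.sum_conj_mul_eq_zero_comm (h : ∑ i, conj (x i) * y i = 0) :
    ∑ i, conj (y i) * x i = 0 := by
  simpa [map_sum, mul_comm] using congrArg conj h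

theorem Finset.sum_conj_mul_linearCombination_eq_zero (s t : ℂ)
    (hu : ∑ i, conj (x i) * u i = 0) (hv : ∑ i, conj (x i) * v i = 0) :
    ∑ i, conj (x i) * (s * u i + t * v i) = 0 := by
  simp only [mul_add, Finset.sum_add_distrib, mul_left_comm _ s, mul_left_comm _ t,
    ← Finset.mul_sum, hu, hv, mul_zero, add_zero]

end Orthogonality

namespace Matrix

variable {m n : Type*} [DecidableEq n]

/-- `H(α)` of the paper is `H.erPhase A B (exp (α * I))`. -/
noncomputable def erPhase (H : Matrix m n ℂ) (A B : n) (e : ℂ) : Matrix m n ℂ :=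
  fun i j => if (j = A ∨ j = B) ∧ H i A * conj (H i B) = -1 then e * H i j else H i j

def ColumnsOrthogonal (H : Matrix m n ℂ) [Fintype m] : Prop :=
  ∀ a b, a ≠ b → ∑ i, conj (H i a) * H i b = 0

def IsERPair (H : Matrix m n ℂ) (A B : n) : Prop :=
  ∀ i, H i A * conj (H i B) = 1 ∨ H i A * conj (H i B) = -1

variable {H : Matrix m n ℂ} {A B : n} {e : ℂ}

theorem erPhase_apply_of_ne {i : m} {j : n} (hA : j ≠ A) (hB : j ≠ B) :
    H.erPhase A B e i j = H i j := by
  simp [erPhase, hA, hB]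

theorem norm_erPhase_apply {i : m} {j : n} (he : ‖e‖ = 1) (h : ‖H i j‖ = 1) :
    ‖H.erPhase A B e i j‖ = 1 := by
  unfold erPhase; split_ifs <;> simp [he, h]

theorem conj_erPhase_mul_erPhase (he : ‖e‖ = 1) {i : m} {a b : n} (ha : a = A ∨ a = B)
    (hb : b = A ∨ b = B) :
    conj (H.erPhase A B e i a) * H.erPhase A B e i b = conj (H i a) * H i b := by
  by_cases hflip : H i A * conj (H i B) = -1
  · simp only [erPhase, ha, hb, hflip, and_self, if_true, map_mul]
    rw [mul_mul_mul_comm, conj_mul_self_of_norm_eq_one he, one_mul]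
  · simp only [erPhase, hflip, and_false, if_false]

section Row

variable {i : m} (hB : ‖H i B‖ = 1)
  (hER : H i A * conj (H i B) = 1 ∨ H i A * conj (H i B) = -1)
include hB hER

theorem erPhase_apply_left :
    H.erPhase A B e i A = (1 + e) / 2 * H i A + (1 - e) / 2 * H i B := by
  unfold erPhase
  rcases eq_or_eq_neg_of_mul_conj_eq_one_or_neg_one hB hER with ⟨hrow, hflip⟩ | ⟨hrow, hflip⟩
  · rw [if_neg (fun h => hflip h.2), hrow]; ring
  · rw [if_pos ⟨.inl rfl, hflip⟩, hrow]; ring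

theorem erPhase_apply_right :
    H.erPhase A B e i B = (1 - e) / 2 * H i A + (1 + e) / 2 * H i B := by
  unfold erPhase
  rcases eq_or_eq_neg_of_mul_conj_eq_one_or_neg_one hB hER with ⟨hrow, hflip⟩ | ⟨hrow, hflip⟩
  · rw [if_neg (fun h => hflip h.2), hrow]; ring
  · rw [if_pos ⟨.inr rfl, hflip⟩, hrow]; ring

end Row

variable [Fintype m] (hB : ∀ i, ‖H i B‖ = 1) (hER : H.IsERPair A B) (hH : H.ColumnsOrthogonal)
include hB hER hH

theorem sum_conj_erPhase_mul_eq_zero_of_ne {c j : n} (hcA : c ≠ A) (hcB : c ≠ B) (hcj : c ≠ j) :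
    ∑ i, conj (H.erPhase A B e i c) * H.erPhase A B e i j = 0 := by
  simp only [erPhase_apply_of_ne hcA hcB]
  by_cases hjA : j = A
  · subst hjA
    simp only [fun i => erPhase_apply_left (e := e) (hB i) (hER i)]
    exact Finset.sum_conj_mul_linearCombination_eq_zero _ _ (hH c j hcA) (hH c B hcB)
  by_cases hjB : j = B
  · subst hjB
    simp only [fun i => erPhase_apply_right (e := e) (hB i) (hER i)]
    exact Finset.sum_conj_mul_linearCombination_eq_zero _ _ (hH c A hcA) (hH c j hcB)
  simp only [erPhase_apply_of_ne hjA hjB]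
  exact hH c j hcj

theorem ColumnsOrthogonal.erPhase (he : ‖e‖ = 1) : (H.erPhase A B e).ColumnsOrthogonal := by
  intro a b hab
  by_cases ha : a = A ∨ a = B
  · by_cases hb : b = A ∨ b = B
    · simp only [conj_erPhase_mul_erPhase he ha hb]
      exact hH a b hab
    · obtain ⟨hbA, hbB⟩ := not_or.mp hb
      exact Finset.sum_conj_mul_eq_zero_comm
        (sum_conj_erPhase_mul_eq_zero_of_ne hB hER hH hbA hbB (Ne.symm hab))
  · obtain ⟨haA, haB⟩ := not_or.mp ha
    exact sum_conj_erPhase_mul_eq_zero_of_ne hB hER hH haA haB hab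

end Matrix

theorem stmt_14_general {N : ℕ} (H : Matrix (Fin N) (Fin N) ℂ)
    (hmod : ∀ i j, ‖H i j‖ = 1)
    (horth : ∀ a b : Fin N, a ≠ b → ∑ i, (starRingEnd ℂ) (H i a) * H i b = 0)
    (A B : Fin N)
    (hER : ∀ i, H i A * (starRingEnd ℂ) (H i B) = 1 ∨ H i A * (starRingEnd ℂ) (H i B) = -1)
    (α : ℝ) :
    (∀ i j, ‖
        ((fun i j => if (j = A ∨ j = B) ∧ H i A * (starRingEnd ℂ) (H i B) = -1
            then Complex.exp ((α : ℂ) * I) * H i j else H i j) i j)‖ = 1) ∧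
    (∀ a b : Fin N, a ≠ b →
      ∑ i, (starRingEnd ℂ)
          ((fun i j => if (j = A ∨ j = B) ∧ H i A * (starRingEnd ℂ) (H i B) = -1
              then Complex.exp ((α : ℂ) * I) * H i j else H i j) i a)
        * ((fun i j => if (j = A ∨ j = B) ∧ H i A * (starRingEnd ℂ) (H i B) = -1
              then Complex.exp ((α : ℂ) * I) * H i j else H i j) i b) = 0) :=
  ⟨fun i j => Matrix.norm_erPhase_apply (norm_exp_ofReal_mul_I α) (hmod i j),
    Matrix.ColumnsOrthogonal.erPhase (fun i => hmod i B) hER horth (norm_exp_ofReal_mul_I α)⟩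

theorem stmt_14 {N : ℕ} (H : Matrix (Fin N) (Fin N) ℂ)
    (hmod : ∀ i j, ‖H i j‖ = 1)
    (horth : ∀ a b : Fin N, a ≠ b → ∑ i, (starRingEnd ℂ) (H i a) * H i b = 0)
    (A B : Fin N) (hAB : A ≠ B)
    (hER : ∀ i, H i A * (starRingEnd ℂ) (H i B) = 1 ∨ H i A * (starRingEnd ℂ) (H i B) = -1)
    (α : ℝ) :
    (∀ i j, ‖
        ((fun i j => if (j = A ∨ j = B) ∧ H i A * (starRingEnd ℂ) (H i B) = -1
            then Complex.exp ((α : ℂ) * I) * H i j else H i j) i j)‖ = 1) ∧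
    (∀ a b : Fin N, a ≠ b →
      ∑ i, (starRingEnd ℂ)
          ((fun i j => if (j = A ∨ j = B) ∧ H i A * (starRingEnd ℂ) (H i B) = -1
              then Complex.exp ((α : ℂ) * I) * H i j else H i j) i a)
        * ((fun i j => if (j = A ∨ j = B) ∧ H i A * (starRingEnd ℂ) (H i B) = -1
              then Complex.exp ((α : ℂ) * I) * H i j else H i j) i b) = 0) :=
  stmt_14_general H hmod horth A B hER α
end
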